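/- For a non-zero finite signed measure μ on ℝ, the number of zero-crossings Σ(μ) equals the supremum of the set of n ∈ ℕ for which there exist continuous, nonnegative, compactly supported functions g₁, …, g_{n+1} on ℝ such that (a) for i < j, g_i(x) > 0 and g_j(y) > 0 imply x < y, and (b) (∫ g_k dμ)(∫ g_{k+1} dμ) < 0 for 1 ≤ k ≤ n (with the convention sup ∅ = 0). -/

import Mathlib

open MeasureTheory ENNReal

noncomputable def altMeasure (p q : MeasureTheory.Measure ℝ) (n : ℕ) :
    MeasureTheory.Measure (Fin n → ℝ) :=
  MeasureTheory.Measure.pi (fun i => if Even (i : ℕ) then p else q)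

def orderedSet (n : ℕ) : Set (Fin n → ℝ) := {x | StrictMono x}

noncomputable def sigmaPair (p q : MeasureTheory.Measure ℝ) : ℕ∞ :=
  ⨆ (n : ℕ) (_ : 0 < altMeasure p q (n+1) (orderedSet (n+1)) ∨
      0 < altMeasure q p (n+1) (orderedSet (n+1))), (n : ℕ∞)

/-- Number of zero-crossings of a finite signed measure. -/
noncomputable def sigmaCross (μ : MeasureTheory.SignedMeasure ℝ) : ℕ∞ :=
  sigmaPair μ.toJordanDecomposition.posPart μ.toJordanDecomposition.negPart

/-- Integral of a function against a finite signed measure: `∫ g dμ⁺ - ∫ g dμ⁻`. -/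
noncomputable def sInt (μ : MeasureTheory.SignedMeasure ℝ) (g : ℝ → ℝ) : ℝ :=
  (∫ x, g x ∂μ.toJordanDecomposition.posPart) - (∫ x, g x ∂μ.toJordanDecomposition.negPart)

/-!
If the alternating product measure charges the open set of increasing tuples, it charges an open
box `∏ Uₖ` inside it, so the `k`-th factor measure charges `Uₖ`. As `μ⁺ ⟂ μ⁻`, regularity and
Urysohn's lemma give a bump `gₖ` supported in `Uₖ` whose `μ`-integral has the sign of that factor,
and the supports inherit the order of the box. Conversely, the positivity sets of such bumps form a
box of increasing tuples charged factor by factor. Consecutive integrals of opposite signs means a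
sign pattern `±(-1)ᵏ`, one for each of the two alternating product measures; the index `n = 0`
contributes `0` to both suprema.
-/

open Set TopologicalSpace

theorem MeasureTheory.Measure.MutuallySingular.exists_continuous_integral_lt
    {X : Type*} [TopologicalSpace X] [RegularSpace X] [LocallyCompactSpace X]
    [MeasurableSpace X] [BorelSpace X] {p q : Measure X} [IsFiniteMeasure p] [IsFiniteMeasure q]
    [p.InnerRegularCompactLTTop] [q.InnerRegularCompactLTTop]
    (hpq : p ⟂ₘ q) {U : Set X} (hU : IsOpen U) (hpU : p U ≠ 0) :
    ∃ g : X → ℝ, Continuous g ∧ (∀ x, 0 ≤ g x) ∧ HasCompactSupport g ∧ (∀ x, 0 < g x → x ∈ U) ∧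
      ∫ x, g x ∂q < ∫ x, g x ∂p := by
  obtain ⟨s, hs, hps, hqs⟩ := hpq
  obtain ⟨K, hKU, hK, hpK⟩ : ∃ K ⊆ U \ s, IsCompact K ∧ 0 < p K :=
    (hU.measurableSet.diff hs).exists_lt_isCompact_of_ne_top (measure_ne_top _ _)
      (by rwa [measure_sdiff_null hps, pos_iff_ne_zero])
  have hqK : q K = 0 := measure_mono_null (hKU.trans (sdiff_subset_compl U s)) hqs
  obtain ⟨W, hKW, hW, hqW⟩ := hK.exists_isOpen_lt_of_lt (p K) (hqK ▸ hpK)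
  obtain ⟨g, hgK, hgW, hgc, hg01⟩ := exists_continuous_one_zero_of_isCompact hK
    (hW.inter hU).isClosed_compl
    (disjoint_compl_right_iff_subset.mpr (subset_inter hKW (hKU.trans sdiff_subset)))
  refine ⟨g, g.continuous, fun x => (hg01 x).1, hgc,
    fun x hx => by_contra fun hxU => hx.ne' (hgW fun h => hxU h.2), ?_⟩
  have hq : ENNReal.ofReal (∫ x, g x ∂q) < p K :=
    (integral_le_measure (s := W) (fun x _ => (hg01 x).2)
      (fun x hx => (hgW fun h => hx h.1).le)).trans_lt hqW
  have hp : p K ≤ ENNReal.ofReal (∫ x, g x ∂p) :=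
    (g.continuous.integrable_of_hasCompactSupport hgc).measure_le_integral
      (ae_of_all _ fun x => (hg01 x).1) fun x hx => (hgK hx).ge
  exact (ENNReal.ofReal_lt_ofReal_iff'.1 (hq.trans_le hp)).1

theorem exists_univ_pi_subset_measure_pos {ι : Type*} [Finite ι] {X : ι → Type*}
    [∀ i, TopologicalSpace (X i)] [∀ i, SecondCountableTopology (X i)]
    [MeasurableSpace (∀ i, X i)] (ν : Measure (∀ i, X i)) {S : Set (∀ i, X i)} (hS : IsOpen S)
    (hν : ν S ≠ 0) :
    ∃ U : ∀ i, Set (X i), (∀ i, IsOpen (U i)) ∧ univ.pi U ⊆ S ∧ ν (univ.pi U) ≠ 0 := by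
  classical
  have hB := isTopologicalBasis_pi fun i => isTopologicalBasis_opens (α := X i)
  obtain ⟨T, hTc, hTB, hTS⟩ :=
    isOpen_sUnion_countable {b | b ∈ _ ∧ b ⊆ S} fun b hb => hB.isOpen hb.1
  rw [hB.open_eq_sUnion' hS, ← hTS] at hν
  obtain ⟨b, hbT, hb⟩ : ∃ b ∈ T, ν b ≠ 0 := by
    by_contra! h
    exact hν ((measure_sUnion_null_iff hTc).2 h)
  obtain ⟨⟨U, F, hU, rfl⟩, hbS⟩ := hTB hbT
  refine ⟨fun i => if i ∈ (F : Set ι) then U i else univ, fun i => ?_, ?_, ?_⟩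
  · dsimp only
    split_ifs with hi
    exacts [hU i hi, isOpen_univ]
  all_goals rwa [univ_pi_ite]

theorem isOpen_orderedSet (n : ℕ) : IsOpen (orderedSet n) := by
  simp only [orderedSet, StrictMono, ofPred_forall]
  exact isOpen_iInter_of_finite fun i => isOpen_iInter_of_finite fun j =>
    isOpen_iInter_of_finite fun _ => isOpen_lt (continuous_apply i) (continuous_apply j)

theorem lt_of_univ_pi_subset_orderedSet {n : ℕ} {U : Fin n → Set ℝ} (hU : ∀ i, (U i).Nonempty)
    (hUS : univ.pi U ⊆ orderedSet n) {i j : Fin n} (hij : i < j) {x y : ℝ} (hx : x ∈ U i)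
    (hy : y ∈ U j) : x < y := by
  obtain ⟨z, hz⟩ := univ_pi_nonempty_iff.2 hU
  have hmem : Function.update (Function.update z i x) j y ∈ univ.pi U := by
    refine (update_mem_pi_iff_of_mem ?_).2 fun _ => hy
    exact (update_mem_pi_iff_of_mem hz).2 fun _ => hx
  simpa [hij.ne, hij.ne'] using hUS hmem hij

instance MeasureTheory.sigmaFinite_ite {α : Type*} [MeasurableSpace α] (c : Prop) [Decidable c]
    (p q : Measure α) [SigmaFinite p] [SigmaFinite q] :
    SigmaFinite (if c then p else q) := by
  split_ifs <;> infer_instance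

theorem altMeasure_univ_pi (p q : Measure ℝ) [SigmaFinite p] [SigmaFinite q] {n : ℕ}
    (U : Fin n → Set ℝ) :
    altMeasure p q n (univ.pi U) = ∏ k : Fin n, (if Even (k : ℕ) then p else q) (U k) :=
  Measure.pi_pi _ U

theorem measure_setOf_pos_ne_zero_of_integral_pos {α : Type*} [MeasurableSpace α]
    {ρ : Measure α} {g : α → ℝ} (hg : ∀ x, 0 ≤ g x) (h : 0 < ∫ x, g x ∂ρ) :
    ρ {x | 0 < g x} ≠ 0 := by
  have hsupp : {x | 0 < g x} = Function.support g := by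
    ext x
    simp [(hg x).lt_iff_ne, eq_comm]
  rw [hsupp, Ne, Measure.measure_support_eq_zero_iff ρ]
  intro h0
  simp [integral_eq_zero_of_ae h0] at h

theorem integral_ite_pos_of_neg_one_pow_mul_pos {α : Type*} [MeasurableSpace α]
    {p q : Measure α} {g : α → ℝ} (hg : ∀ x, 0 ≤ g x) {k : ℕ}
    (h : 0 < (-1) ^ k * ((∫ x, g x ∂p) - ∫ x, g x ∂q)) :
    0 < ∫ x, g x ∂(if Even k then p else q) := by
  rcases Nat.even_or_odd k with he | ho
  · rw [if_pos he]
    rw [he.neg_one_pow, one_mul] at h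
    linarith [integral_nonneg (μ := q) (f := g) hg]
  · rw [if_neg (Nat.not_even_iff_odd.2 ho)]
    rw [ho.neg_one_pow] at h
    linarith [integral_nonneg (μ := p) (f := g) hg]

theorem altMeasure_orderedSet_pos_iff {p q : Measure ℝ} [IsFiniteMeasure p] [IsFiniteMeasure q]
    (hpq : p ⟂ₘ q) (n : ℕ) :
    0 < altMeasure p q n (orderedSet n) ↔ ∃ g : Fin n → ℝ → ℝ,
      (∀ k, Continuous (g k) ∧ (∀ x, 0 ≤ g k x) ∧ HasCompactSupport (g k)) ∧
      (∀ i j : Fin n, i < j → ∀ x y : ℝ, 0 < g i x → 0 < g j y → x < y) ∧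
      ∀ k : Fin n, 0 < (-1) ^ (k : ℕ) * ((∫ x, g k x ∂p) - ∫ x, g k x ∂q) := by
  constructor
  · intro h
    obtain ⟨U, hUo, hUS, hU⟩ := exists_univ_pi_subset_measure_pos _ (isOpen_orderedSet n) h.ne'
    rw [altMeasure_univ_pi, Finset.prod_ne_zero_iff] at hU
    have hbump : ∀ k : Fin n, ∃ g : ℝ → ℝ,
        (Continuous g ∧ (∀ x, 0 ≤ g x) ∧ HasCompactSupport g) ∧ (∀ x, 0 < g x → x ∈ U k) ∧
          0 < (-1) ^ (k : ℕ) * ((∫ x, g x ∂p) - ∫ x, g x ∂q) := by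
      intro k
      have hk := hU k (Finset.mem_univ k)
      rcases Nat.even_or_odd k with he | ho
      · rw [if_pos he] at hk
        obtain ⟨g, hc, hn, hs, hgU, hlt⟩ := hpq.exists_continuous_integral_lt (hUo k) hk
        exact ⟨g, ⟨hc, hn, hs⟩, hgU, by rw [he.neg_one_pow]; linarith⟩
      · rw [if_neg (Nat.not_even_iff_odd.2 ho)] at hk
        obtain ⟨g, hc, hn, hs, hgU, hlt⟩ := hpq.symm.exists_continuous_integral_lt (hUo k) hk
        exact ⟨g, ⟨hc, hn, hs⟩, hgU, by rw [ho.neg_one_pow]; linarith⟩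
    choose g hg hgU hgs using hbump
    have hne : ∀ k, (U k).Nonempty :=
      fun k => nonempty_of_measure_ne_zero (hU k (Finset.mem_univ k))
    exact ⟨g, hg, fun i j hij x y hx hy =>
      lt_of_univ_pi_subset_orderedSet hne hUS hij (hgU i x hx) (hgU j y hy), hgs⟩
  · rintro ⟨g, hg, hord, hsign⟩
    have hsub : univ.pi (fun k => {x | 0 < g k x}) ⊆ orderedSet n :=
      fun x hx i j hij => hord i j hij _ _ (hx i trivial) (hx j trivial)
    refine lt_of_lt_of_le ?_ (measure_mono hsub)
    rw [altMeasure_univ_pi, pos_iff_ne_zero, Finset.prod_ne_zero_iff]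
    exact fun k _ => measure_setOf_pos_ne_zero_of_integral_pos (hg k).2.1
      (integral_ite_pos_of_neg_one_pow_mul_pos (hg k).2.1 (hsign k))

theorem mul_succ_neg_of_neg_one_pow_mul_pos {n : ℕ} {s : Fin (n + 1) → ℝ}
    (h : ∀ k : Fin (n + 1), 0 < (-1) ^ (k : ℕ) * s k) (k : Fin n) :
    s k.castSucc * s k.succ < 0 := by
  have hsq : ((-1 : ℝ) ^ (k : ℕ)) ^ 2 = 1 := by
    rw [← pow_mul, mul_comm, pow_mul, neg_one_sq, one_pow]
  have := mul_pos (h k.castSucc) (h k.succ)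
  simp only [Fin.val_castSucc, Fin.val_succ, pow_succ] at this
  nlinarith

theorem neg_one_pow_mul_pos_of_mul_succ_neg {n : ℕ} {s : Fin (n + 1) → ℝ} (h0 : 0 < s 0)
    (h : ∀ k : Fin n, s k.castSucc * s k.succ < 0) (k : Fin (n + 1)) :
    0 < (-1) ^ (k : ℕ) * s k := by
  induction k using Fin.induction with
  | zero => simpa using h0
  | succ k ih =>
    have hsq : ((-1 : ℝ) ^ (k : ℕ)) ^ 2 = 1 := by
      rw [← pow_mul, mul_comm, pow_mul, neg_one_sq, one_pow]
    have hprod : 0 < (-1) ^ (k : ℕ) * s k.castSucc * ((-1) ^ ((k : ℕ) + 1) * s k.succ) := by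
      rw [pow_succ]
      nlinarith [h k]
    exact pos_of_mul_pos_right hprod ih.le

theorem mul_succ_neg_iff {n : ℕ} (s : Fin (n + 2) → ℝ) :
    (∀ k : Fin (n + 1), s k.castSucc * s k.succ < 0) ↔
      (∀ k : Fin (n + 2), 0 < (-1) ^ (k : ℕ) * s k) ∨
        ∀ k : Fin (n + 2), 0 < (-1) ^ (k : ℕ) * -s k := by
  constructor
  · intro h
    rcases lt_or_gt_of_ne (show s 0 ≠ 0 from fun h0 => by simpa [h0] using h 0) with hneg | hpos
    · exact Or.inr (neg_one_pow_mul_pos_of_mul_succ_neg (s := -s) (neg_pos.2 hneg)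
        (fun k => by simpa using h k))
    · exact Or.inl (neg_one_pow_mul_pos_of_mul_succ_neg hpos h)
  · rintro (h | h) k
    · exact mul_succ_neg_of_neg_one_pow_mul_pos h k
    · simpa using mul_succ_neg_of_neg_one_pow_mul_pos (s := -s) h k

theorem iSup_natCast_congr_succ {P Q : ℕ → Prop} (h : ∀ n, P (n + 1) ↔ Q (n + 1)) :
    ⨆ (n : ℕ) (_ : P n), (n : ℕ∞) = ⨆ (n : ℕ) (_ : Q n), (n : ℕ∞) := by
  have key : ∀ {P Q : ℕ → Prop}, (∀ n, P (n + 1) → Q (n + 1)) →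
      ⨆ (n : ℕ) (_ : P n), (n : ℕ∞) ≤ ⨆ (n : ℕ) (_ : Q n), (n : ℕ∞) := by
    intro P Q h
    refine iSup₂_le fun n hn => ?_
    cases n with
    | zero => simp
    | succ n => exact le_iSup₂_of_le (n + 1) (h n hn) le_rfl
  exact le_antisymm (key fun n => (h n).1) (key fun n => (h n).2)

theorem stmt3_general (μ : MeasureTheory.SignedMeasure ℝ) :
    sigmaCross μ =
      ⨆ (n : ℕ) (_ : ∃ g : Fin (n + 1) → ℝ → ℝ,
        (∀ k, Continuous (g k) ∧ (∀ x, 0 ≤ g k x) ∧ HasCompactSupport (g k)) ∧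
        (∀ i j : Fin (n + 1), i < j → ∀ x y : ℝ, 0 < g i x → 0 < g j y → x < y) ∧
        (∀ k : Fin n, sInt μ (g k.castSucc) * sInt μ (g k.succ) < 0)), (n : ℕ∞) := by
  have hpq := μ.toJordanDecomposition.mutuallySingular
  refine iSup_natCast_congr_succ fun n => ?_
  rw [altMeasure_orderedSet_pos_iff hpq, altMeasure_orderedSet_pos_iff hpq.symm, ← exists_or]
  refine exists_congr fun g => ?_
  rw [← and_or_left, ← and_or_left, mul_succ_neg_iff fun k => sInt μ (g k)]
  simp only [sInt, neg_sub]

/-- Lemma 2.2: for a nonzero finite signed measure `μ`, the number of zero-crossings `Σ(μ)`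
equals the supremum of those `n` for which there are continuous, nonnegative, compactly
supported test functions `g 0, …, g n` with ordered supports and alternating signs of
`∫ g k dμ`. -/
theorem stmt3 (μ : MeasureTheory.SignedMeasure ℝ) (hμ : μ ≠ 0) :
    sigmaCross μ =
      ⨆ (n : ℕ) (_ : ∃ g : Fin (n + 1) → ℝ → ℝ,
        (∀ k, Continuous (g k) ∧ (∀ x, 0 ≤ g k x) ∧ HasCompactSupport (g k)) ∧
        (∀ i j : Fin (n + 1), i < j → ∀ x y : ℝ, 0 < g i x → 0 < g j y → x < y) ∧
        (∀ k : Fin n, sInt μ (g k.castSucc) * sInt μ (g k.succ) < 0)), (n : ℕ∞) :=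
  stmt3_general μ
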